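/- arXiv:1912.01928 — 3 statements merged into one kernel-verified Lean document; each statement's English description precedes it below -/
import Mathlib

section
/- The q-Bernstein polynomials satisfy the inversion formula X^{n−t} Y^t = [n choose t]_q^{−1} ∑_{u=t}^{n} [u choose t]_q B_{n,u}(X,Y;q) for 0 ≤ t ≤ n, where B_{n,u}(X,Y;q) = [n choose u]_q Y^u ∏_{j=0}^{n−u−1} (X − q^j Y). -/
/-- The `q`-binomial coefficient, via the `q`-Pascal recursion. -/
def qbinR (q : ℚ) : ℕ → ℕ → ℚ
  | _, 0 => 1
  | 0, _ + 1 => 0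
  | a + 1, b + 1 => qbinR q a b + q ^ (b + 1) * qbinR q a (b + 1)

/-- The `(n,u)`-th `q`-Bernstein polynomial
`B_{n,u}(X,Y;q) = [n choose u]_q · Y^u · ∏_{j=0}^{n-u-1} (X - q^j Y)`. -/
def qBernstein (q : ℚ) (n u : ℕ) (X Y : ℚ) : ℚ :=
  qbinR q n u * Y ^ u * ∏ j ∈ Finset.range (n - u), (X - q ^ j * Y)

/-- `q`-integer `[m]_q = 1 + q + ... + q^{m-1}`. -/
def qint (q : ℚ) : ℕ → ℚ
  | 0 => 0
  | m + 1 => qint q m + q ^ m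

/-- `q`-factorial. -/
def qfact (q : ℚ) : ℕ → ℚ
  | 0 => 1
  | m + 1 => qfact q m * qint q (m + 1)

lemma qint_add (q : ℚ) (a b : ℕ) : qint q (a + b) = qint q a + q ^ a * qint q b := by
  induction b with
  | zero => simp [qint]
  | succ b ih =>
    rw [show a + (b + 1) = (a + b) + 1 by omega, qint, qint, ih, pow_add]; ring

lemma qint_pos (q : ℚ) (hq : 2 ≤ q) (m : ℕ) : 0 < qint q (m + 1) := by
  induction m with
  | zero => simp [qint]
  | succ m ih =>
    have : (0:ℚ) < q ^ (m+1) := by positivity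
    simpa [qint] using add_pos ih this

lemma qfact_pos (q : ℚ) (hq : 2 ≤ q) (m : ℕ) : 0 < qfact q m := by
  induction m with
  | zero => simp [qfact]
  | succ m ih => exact mul_pos ih (qint_pos q hq m)

lemma qbin_zero_of_lt (q : ℚ) {n k : ℕ} (h : n < k) : qbinR q n k = 0 := by
  induction n generalizing k with
  | zero => obtain ⟨k, rfl⟩ : ∃ k', k = k' + 1 := ⟨k - 1, by omega⟩; rfl
  | succ n ih =>
    obtain ⟨k, rfl⟩ : ∃ k', k = k' + 1 := ⟨k - 1, by omega⟩
    simp [qbinR, ih (by omega : n < k), ih (by omega : n < k + 1)]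

lemma qbin_zero_right (q : ℚ) (n : ℕ) : qbinR q n 0 = 1 := by
  cases n <;> rfl

lemma qbin_diag (q : ℚ) (n : ℕ) : qbinR q n n = 1 := by
  induction n with
  | zero => rfl
  | succ n ih => simp [qbinR, ih, qbin_zero_of_lt q (Nat.lt_succ_self n)]

lemma qbin_eq (q : ℚ) (hq : 2 ≤ q) {n k : ℕ} (h : k ≤ n) :
    qbinR q n k = qfact q n / (qfact q k * qfact q (n - k)) := by
  induction n generalizing k with
  | zero =>
    interval_cases k
    simp [qbinR, qfact]
  | succ a ih =>
    match k with
    | 0 =>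
      have h0 := (qfact_pos q hq (a+1)).ne'
      show (1:ℚ) = qfact q (a+1) / (qfact q 0 * qfact q (a + 1 - 0))
      rw [Nat.sub_zero, show qfact q 0 = (1:ℚ) from rfl, one_mul, div_self h0]
    | b + 1 =>
      rcases eq_or_lt_of_le (by omega : b ≤ a) with rfl | hba
      · have h0 := (qfact_pos q hq (b+1)).ne'
        rw [qbin_diag, Nat.sub_self, show qfact q 0 = (1:ℚ) from rfl, mul_one, div_self h0]
      · obtain ⟨c, rfl⟩ : ∃ c, a = b + 1 + c := ⟨a - b - 1, by omega⟩
        show qbinR q (b+1+c) b + q ^ (b + 1) * qbinR q (b+1+c) (b+1) = _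
        rw [ih (by omega : b ≤ b+1+c), ih (by omega : b+1 ≤ b+1+c)]
        have h1 : b + 1 + c - b = c + 1 := by omega
        have h2 : b + 1 + c - (b + 1) = c := by omega
        have h3 : b + 1 + c + 1 - (b + 1) = c + 1 := by omega
        rw [h1, h2, h3]
        have hkey : qint q (b + 1 + c + 1) = qint q (b + 1) + q ^ (b+1) * qint q (c + 1) := by
          have := qint_add q (b+1) (c+1); rw [show b+1+(c+1) = b+1+c+1 by omega] at this
          exact this
        have e1 : qfact q (b + 1 + c + 1) = qfact q (b+1+c) * qint q (b+1+c+1) := rfl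
        have e2 : qfact q (b + 1) = qfact q b * qint q (b+1) := rfl
        have e3 : qfact q (c + 1) = qfact q c * qint q (c+1) := rfl
        have nb := (qfact_pos q hq b).ne'
        have nc := (qfact_pos q hq c).ne'
        have nb1 := (qint_pos q hq b).ne'
        have nc1 := (qint_pos q hq c).ne'
        rw [e1, e2, e3, hkey]
        field_simp

lemma qbin_pos (q : ℚ) (hq : 2 ≤ q) {n k : ℕ} (h : k ≤ n) : 0 < qbinR q n k := by
  rw [qbin_eq q hq h]
  exact div_pos (qfact_pos q hq n) (mul_pos (qfact_pos q hq k) (qfact_pos q hq (n-k)))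

lemma qbin_subset (q : ℚ) (hq : 2 ≤ q) {t u n : ℕ} (h1 : t ≤ u) (h2 : u ≤ n) :
    qbinR q u t * qbinR q n u = qbinR q n t * qbinR q (n - t) (u - t) := by
  rw [qbin_eq q hq h1, qbin_eq q hq h2, qbin_eq q hq (le_trans h1 h2),
    qbin_eq q hq (by omega : u - t ≤ n - t)]
  have h3 : n - t - (u - t) = n - u := by omega
  rw [h3]
  have p1 := (qfact_pos q hq t).ne'
  have p2 := (qfact_pos q hq (u-t)).ne'
  have p3 := (qfact_pos q hq (n-u)).ne'
  have p4 := (qfact_pos q hq u).ne'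
  have p5 := (qfact_pos q hq (n-t)).ne'
  have e : qfact q u = qfact q t * (qfact q u / qfact q t) := by field_simp
  field_simp

lemma qbin_pascal2 (q : ℚ) (hq : 2 ≤ q) {a b : ℕ} (h : b ≤ a) :
    qbinR q (a + 1) (b + 1) = q ^ (a - b) * qbinR q a b + qbinR q a (b + 1) := by
  rcases eq_or_lt_of_le h with rfl | hba
  · simp [qbin_diag, qbin_zero_of_lt q (Nat.lt_succ_self b)]
  · rw [qbin_eq q hq (by omega : b + 1 ≤ a + 1), qbin_eq q hq h,
      qbin_eq q hq (by omega : b + 1 ≤ a)]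
    obtain ⟨c, rfl⟩ : ∃ c, a = b + 1 + c := ⟨a - b - 1, by omega⟩
    have h1 : b + 1 + c - b = c + 1 := by omega
    have h2 : b + 1 + c - (b + 1) = c := by omega
    have h3 : b + 1 + c + 1 - (b + 1) = c + 1 := by omega
    rw [h1, h2, h3]
    have hkey : qint q (b + 1 + c + 1) = qint q (c + 1) + q ^ (c+1) * qint q (b + 1) := by
      have := qint_add q (c+1) (b+1); rw [show c+1+(b+1) = b+1+c+1 by omega] at this
      exact this
    have e1 : qfact q (b + 1 + c + 1) = qfact q (b+1+c) * qint q (b+1+c+1) := rfl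
    have e2 : qfact q (b + 1) = qfact q b * qint q (b+1) := rfl
    have e3 : qfact q (c + 1) = qfact q c * qint q (c+1) := rfl
    have nb := (qfact_pos q hq b).ne'
    have nc := (qfact_pos q hq c).ne'
    have nb1 := (qint_pos q hq b).ne'
    have nc1 := (qint_pos q hq c).ne'
    rw [e1, e2, e3, hkey]
    field_simp
    ring

lemma key1 (q X Y : ℚ) (hq : 2 ≤ q) (m : ℕ) :
    ∑ k ∈ Finset.range (m + 1),
      qbinR q m k * Y ^ k * ∏ j ∈ Finset.range (m - k), (X - q ^ j * Y) = X ^ m := by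
  induction m with
  | zero => simp [qbinR]
  | succ m ih =>
    rw [Finset.sum_range_succ']
    have step : ∀ j ∈ Finset.range (m + 1),
        qbinR q (m+1) (j+1) * Y ^ (j+1) * ∏ i ∈ Finset.range (m + 1 - (j+1)), (X - q ^ i * Y)
        = q ^ (m - j) * qbinR q m j * Y ^ (j+1) * ∏ i ∈ Finset.range (m - j), (X - q ^ i * Y)
          + qbinR q m (j+1) * Y ^ (j+1) * ∏ i ∈ Finset.range (m - j), (X - q ^ i * Y) := by
      intro j hj
      rw [Finset.mem_range] at hj
      rw [qbin_pascal2 q hq (by omega : j ≤ m), show m + 1 - (j+1) = m - j by omega]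
      ring
    rw [Finset.sum_congr rfl step, Finset.sum_add_distrib]
    have shift : ∑ j ∈ Finset.range (m+1),
        qbinR q m (j+1) * Y ^ (j+1) * ∏ i ∈ Finset.range (m - j), (X - q ^ i * Y)
        = (∑ k ∈ Finset.range (m+1),
            qbinR q m k * Y ^ k * ∏ i ∈ Finset.range (m + 1 - k), (X - q ^ i * Y))
          - ∏ i ∈ Finset.range (m + 1), (X - q ^ i * Y) := by
      have h := Finset.sum_range_succ'
        (fun k => qbinR q m k * Y ^ k * ∏ i ∈ Finset.range (m + 1 - k), (X - q ^ i * Y)) (m+1)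
      rw [Finset.sum_range_succ] at h
      simp only [qbin_zero_of_lt q (Nat.lt_succ_self m), zero_mul] at h
      simp only [show ∀ j:ℕ, m + 1 - (j+1) = m - j from fun j => by omega,
        qbin_zero_right, pow_zero, one_mul, Nat.sub_zero] at h
      linarith [h]
    rw [shift]
    have expand : ∀ k ∈ Finset.range (m+1),
        qbinR q m k * Y ^ k * ∏ i ∈ Finset.range (m + 1 - k), (X - q ^ i * Y)
        = qbinR q m k * Y ^ k *
            ((∏ i ∈ Finset.range (m - k), (X - q ^ i * Y)) * (X - q ^ (m-k) * Y)) := by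
      intro k hk
      rw [Finset.mem_range] at hk
      rw [show m + 1 - k = (m - k) + 1 by omega, Finset.prod_range_succ]
    rw [Finset.sum_congr rfl expand]
    have main : (∑ j ∈ Finset.range (m+1),
          q ^ (m - j) * qbinR q m j * Y ^ (j + 1) * ∏ i ∈ Finset.range (m - j), (X - q ^ i * Y))
        + ∑ k ∈ Finset.range (m+1), qbinR q m k * Y ^ k *
            ((∏ i ∈ Finset.range (m - k), (X - q ^ i * Y)) * (X - q ^ (m-k) * Y))
        = X ^ (m+1) := by
      rw [← Finset.sum_add_distrib, show X ^ (m+1) = X * X ^ m by ring, ← ih, Finset.mul_sum]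
      exact Finset.sum_congr rfl fun k hk => by ring
    have hb0 : qbinR q (m+1) 0 * Y ^ 0 * ∏ j ∈ Finset.range (m + 1 - 0), (X - q ^ j * Y)
        = ∏ i ∈ Finset.range (m + 1), (X - q ^ i * Y) := by
      rw [show qbinR q (m+1) 0 = (1:ℚ) from rfl, Nat.sub_zero]; ring
    rw [hb0]
    linarith [main]

/-- The `q`-Bernstein polynomials satisfy the inversion formula
`X^{n-t} Y^t = [n choose t]_q⁻¹ · ∑_{u=t}^{n} [u choose t]_q · B_{n,u}(X,Y;q)`
for `0 ≤ t ≤ n` (as an identity in `ℚ[X,Y]`, stated here at all rational points). -/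
theorem qBernstein_inversion (q : ℚ) (hq : 2 ≤ q) (n t : ℕ) (ht : t ≤ n) (X Y : ℚ) :
    X ^ (n - t) * Y ^ t =
      (qbinR q n t)⁻¹ * ∑ u ∈ Finset.Icc t n, qbinR q u t * qBernstein q n u X Y := by
  obtain ⟨m, rfl⟩ : ∃ m, n = t + m := ⟨n - t, by omega⟩
  have hne : qbinR q (t + m) t ≠ 0 := (qbin_pos q hq (by omega)).ne'
  have hsum : ∑ u ∈ Finset.Icc t (t + m), qbinR q u t * qBernstein q (t + m) u X Y
      = qbinR q (t + m) t * Y ^ t * X ^ m := by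
    rw [show Finset.Icc t (t + m) = Finset.Ico t (t + m + 1) by rw [Finset.Ico_add_one_right_eq_Icc],
      Finset.sum_Ico_eq_sum_range, show t + m + 1 - t = m + 1 by omega]
    have term : ∀ k ∈ Finset.range (m + 1),
        qbinR q (t + k) t * qBernstein q (t + m) (t + k) X Y
        = qbinR q (t + m) t * Y ^ t *
            (qbinR q m k * Y ^ k * ∏ j ∈ Finset.range (m - k), (X - q ^ j * Y)) := by
      intro k hk
      rw [Finset.mem_range] at hk
      unfold qBernstein
      rw [show t + m - (t + k) = m - k by omega, ← mul_assoc, ← mul_assoc,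
        show qbinR q (t+k) t * qbinR q (t+m) (t+k)
          = qbinR q (t+m) t * qbinR q (t+m-t) (t+k-t) from
          qbin_subset q hq (by omega) (by omega),
        show t + m - t = m by omega, show t + k - t = k by omega, pow_add]
      ring
    rw [Finset.sum_congr rfl term, ← Finset.mul_sum, key1 q X Y hq m]
  rw [hsum, show t + m - t = m by omega]
  field_simp
end

section
/- If a rank-metric code C ≤ F_q^{n×m} of dimension k is i-MRD, i.e. d_i(C) = n − ⌊(k−i)/m⌋, then C is (i+m)-MRD (whenever i+m ≤ k). -/
/-- If a rank-metric code `C ≤ F_q^{n×m}` of dimension `k` is `i`-MRD, i.e.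
`d_i(C) = n - ⌊(k-i)/m⌋`, then `C` is `(i+m)`-MRD (whenever `i + m ≤ k`).
Here `d : ℕ → ℤ` denotes the sequence of generalized rank weights of `C`, assumed to
satisfy the standard properties `d_i < d_{i+m}` for `1 ≤ i ≤ k - m` and
`d_j ≤ n - ⌊(k-j)/m⌋` for `1 ≤ j ≤ k`. -/
theorem iMRD_implies_iplusm_MRD (n m k : ℕ) (hm : 1 ≤ m) (d : ℕ → ℤ)
    (hmono : ∀ i : ℕ, 1 ≤ i → i + m ≤ k → d i < d (i + m))
    (hbound : ∀ j : ℕ, 1 ≤ j → j ≤ k → d j ≤ (n : ℤ) - ((k : ℤ) - j) / m)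
    (i : ℕ) (hi : 1 ≤ i) (him : i + m ≤ k)
    (hMRD : d i = (n : ℤ) - ((k : ℤ) - i) / m) :
    d (i + m) = (n : ℤ) - ((k : ℤ) - (i + m)) / m := by
  have h1 := hmono i hi him
  have h2 := hbound (i + m) (by omega) him
  have hm' : (m : ℤ) ≠ 0 := by omega
  have key : ((k : ℤ) - (i + m)) / m = ((k : ℤ) - i) / m - 1 := by
    push_cast
    rw [show (k : ℤ) - (i + m) = (k : ℤ) - i + (-1) * m by ring,
      Int.add_mul_ediv_right _ _ hm']
    ring
  push_cast at h2 ⊢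
  rw [key] at h2 ⊢
  omega
end

section
/- Let (b_u)_{u∈Z} be a sequence with b_u = 0 for u < 0 and b_u = [k − m(n−u−d_i) choose i]_q for u > n − d^⊥ − d_i (an eventually 'q^{m}-geometric-like' tail). Then the power series P(T) = (∑_{u≥0} b_u T^u) · ∏_{j=0}^{i} (1 − q^{mj} T) is a polynomial of degree at most n − d^⊥ − d_i + i + 1, whose coefficient of T^u is p_u = ∑_{j=0}^{i+1} [i+1 choose j]_{q^m} (−1)^j q^{m·binom(j,2)} b_{u−j}. -/
/-!
By the `q`-binomial theorem, `∏_{t ≤ i} (1 - Q^t T)` with `Q = q^m` expands as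
`∑_j (-1)^j Q^(j choose 2) [i+1 choose j]_Q T^j`, which gives the coefficient formula.
For `u - j > n - d^⊥ - d_i` the value `b_{u-j}` is a polynomial of degree at most `i` in `Q^(-j)`,
and the expansion itself vanishes at `T = Q^(-s)` for every `s ≤ i`. Hence the coefficient
sum, a linear combination of these vanishing values, is zero for `u > n - d^⊥ - d_i + i + 1`.
-/

open PowerSeries

/-- The `q`-binomial coefficient `[a choose b]_q` for an integer `a` and natural `b`. -/
noncomputable def qbinQ (q : ℚ) (a : ℤ) (b : ℕ) : ℚ :=
  ∏ i ∈ Finset.range b, (q ^ (a - i) - 1) / (q ^ ((i : ℤ) + 1) - 1)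

open Finset

lemma qbinQ_zero (Q : ℚ) (a : ℤ) : qbinQ Q a 0 = 1 :=
  prod_range_zero _

lemma qbinQ_succ (Q : ℚ) (a : ℤ) (j : ℕ) :
    qbinQ Q a (j + 1) = qbinQ Q a j * ((Q ^ (a - j) - 1) / (Q ^ ((j : ℤ) + 1) - 1)) :=
  prod_range_succ _ _

lemma qbinQ_add_one_succ (Q : ℚ) (a : ℤ) (j : ℕ) :
    qbinQ Q (a + 1) (j + 1) = qbinQ Q a j * ((Q ^ (a + 1) - 1) / (Q ^ ((j : ℤ) + 1) - 1)) := by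
  induction j with
  | zero => simp [qbinQ]
  | succ j ih =>
    rw [qbinQ_succ, ih, qbinQ_succ, show a + 1 - ((j + 1 : ℕ) : ℤ) = a - j by push_cast; ring]
    push_cast
    ring

lemma qbinQ_pascal {Q : ℚ} (hQ : 1 < Q) (a : ℤ) (j : ℕ) :
    qbinQ Q (a + 1) (j + 1) = qbinQ Q a (j + 1) + Q ^ (a - j) * qbinQ Q a j := by
  have hden : Q ^ ((j : ℤ) + 1) - 1 ≠ 0 := (sub_pos.2 (one_lt_zpow₀ hQ (by positivity))).ne'
  have hsplit : Q ^ (a + 1) = Q ^ (a - j) * Q ^ ((j : ℤ) + 1) := by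
    rw [← zpow_add₀ (by positivity)]; ring_nf
  rw [qbinQ_add_one_succ, qbinQ_succ, hsplit]
  field_simp
  ring

lemma qbinQ_natCast_eq_zero_of_lt (Q : ℚ) {c j : ℕ} (h : c < j) : qbinQ Q c j = 0 :=
  prod_eq_zero (mem_range.2 h) (by simp)

noncomputable def qbinSigned (Q : ℚ) (c j : ℕ) : ℚ :=
  qbinQ Q c j * (-1) ^ j * Q ^ j.choose 2

lemma qbinSigned_zero_right (Q : ℚ) (c : ℕ) : qbinSigned Q c 0 = 1 := by
  simp [qbinSigned, qbinQ_zero]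

lemma qbinSigned_eq_zero_of_lt (Q : ℚ) {c j : ℕ} (h : c < j) : qbinSigned Q c j = 0 := by
  simp [qbinSigned, qbinQ_natCast_eq_zero_of_lt Q h]

lemma qbinSigned_succ_succ {Q : ℚ} (hQ : 1 < Q) (c j : ℕ) :
    qbinSigned Q (c + 1) (j + 1) = qbinSigned Q c (j + 1) - Q ^ c * qbinSigned Q c j := by
  have hpow : Q ^ ((c : ℤ) - j) * Q ^ (j + 1).choose 2 = Q ^ c * Q ^ j.choose 2 := by
    rw [Nat.choose_succ_succ', Nat.choose_one_right, ← zpow_natCast, ← zpow_natCast,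
      ← zpow_natCast, ← zpow_add₀ (by positivity), ← zpow_add₀ (by positivity)]
    push_cast; ring_nf
  simp only [qbinSigned, Nat.cast_succ, qbinQ_pascal hQ]
  linear_combination ((-1 : ℚ) ^ (j + 1) * qbinQ Q c j) * hpow

lemma Polynomial.coeff_sum_C_qbinSigned_mul_X_pow (Q : ℚ) (c n : ℕ) :
    (∑ j ∈ range (c + 1), Polynomial.C (qbinSigned Q c j) * Polynomial.X ^ j).coeff n =
      qbinSigned Q c n := by
  simp only [Polynomial.finsetSum_coeff, Polynomial.coeff_C_mul_X_pow, sum_ite_eq, mem_range]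
  split_ifs with h
  · rfl
  · exact (qbinSigned_eq_zero_of_lt Q (by omega)).symm

theorem Polynomial.prod_one_sub_C_pow_mul_X {Q : ℚ} (hQ : 1 < Q) (c : ℕ) :
    ∏ t ∈ range c, (1 - Polynomial.C (Q ^ t) * Polynomial.X) =
      ∑ j ∈ range (c + 1), Polynomial.C (qbinSigned Q c j) * Polynomial.X ^ j := by
  induction c with
  | zero => simp [qbinSigned_zero_right]
  | succ c ih =>
    rw [prod_range_succ, ih]
    ext (_ | n)
    · simp [qbinSigned_zero_right]
    · rw [mul_sub, mul_one, mul_left_comm, ← mul_assoc, coeff_sub, coeff_mul_X, coeff_C_mul]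
      simp only [coeff_sum_C_qbinSigned_mul_X_pow, qbinSigned_succ_succ hQ]

lemma sum_qbinSigned_mul_eval_inv_pow_eq_zero {Q : ℚ} (hQ : 1 < Q) {c : ℕ} (f : Polynomial ℚ)
    (hf : f.natDegree < c) :
    ∑ j ∈ range (c + 1), qbinSigned Q c j * f.eval (Q⁻¹ ^ j) = 0 := by
  have hroot : ∀ s < c, ∑ j ∈ range (c + 1), qbinSigned Q c j * (Q⁻¹ ^ s) ^ j = 0 := by
    intro s hs
    have h := congrArg (Polynomial.eval (Q⁻¹ ^ s)) (Polynomial.prod_one_sub_C_pow_mul_X hQ c)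
    simp only [Polynomial.eval_prod, Polynomial.eval_finsetSum, Polynomial.eval_sub,
      Polynomial.eval_mul, Polynomial.eval_C, Polynomial.eval_X, Polynomial.eval_pow,
      Polynomial.eval_one] at h
    rw [← h]
    refine prod_eq_zero (mem_range.2 hs) ?_
    rw [inv_pow, mul_inv_cancel₀ (by positivity), sub_self]
  calc ∑ j ∈ range (c + 1), qbinSigned Q c j * f.eval (Q⁻¹ ^ j)
      = ∑ s ∈ range c,
          f.coeff s * ∑ j ∈ range (c + 1), qbinSigned Q c j * (Q⁻¹ ^ s) ^ j := by
        simp_rw [Polynomial.eval_eq_sum_range' hf, mul_sum]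
        rw [sum_comm]
        exact sum_congr rfl fun s _ => sum_congr rfl fun j _ => by ring
    _ = 0 := sum_eq_zero fun s hs => by rw [hroot s (mem_range.1 hs), mul_zero]

lemma exists_qbinQ_sub_eq_eval_zpow_neg {q : ℚ} (hq : q ≠ 0) (a : ℤ) (i : ℕ) :
    ∃ f : Polynomial ℚ, f.natDegree ≤ i ∧
      ∀ e : ℤ, qbinQ q (a - e) i = f.eval (q ^ (-e)) := by
  refine ⟨∏ t ∈ range i, (Polynomial.C (q ^ (a - t) / (q ^ ((t : ℤ) + 1) - 1)) *
    Polynomial.X + Polynomial.C (-1 / (q ^ ((t : ℤ) + 1) - 1))), ?_, fun e => ?_⟩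
  · calc _ ≤ ∑ t ∈ range i, 1 :=
          (Polynomial.natDegree_prod_le _ _).trans
            (sum_le_sum fun _ _ => Polynomial.natDegree_linear_le)
      _ = i := by simp
  · simp only [qbinQ, Polynomial.eval_prod, Polynomial.eval_add, Polynomial.eval_mul,
      Polynomial.eval_C, Polynomial.eval_X]
    refine prod_congr rfl fun t _ => ?_
    rw [show a - e - t = (a - t) + -e by ring, zpow_add₀ hq]
    ring

lemma PowerSeries.prod_one_sub_C_pow_mul_X {Q : ℚ} (hQ : 1 < Q) (c : ℕ) :
    ∏ t ∈ range c, (1 - C (Q ^ t) * X : ℚ⟦X⟧) =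
      ∑ j ∈ range (c + 1), C (qbinSigned Q c j) * X ^ j := by
  simpa [map_prod, map_sum] using
    congrArg Polynomial.coeToPowerSeries.ringHom (Polynomial.prod_one_sub_C_pow_mul_X hQ c)

lemma PowerSeries.coeff_mk_mul_sum_C_mul_X_pow {R : Type*} [CommRing R] (b : ℤ → R)
    (hb : ∀ u : ℤ, u < 0 → b u = 0) (a : ℕ → R) (N u : ℕ) :
    coeff u (mk (fun u : ℕ => b u) * ∑ j ∈ range N, C (a j) * X ^ j) =
      ∑ j ∈ range N, a j * b ((u : ℤ) - j) := by
  rw [mul_sum, map_sum]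
  refine sum_congr rfl fun j _ => ?_
  rw [mul_left_comm, coeff_C_mul, coeff_mul_X_pow']
  split_ifs with h
  · rw [coeff_mk, Nat.cast_sub h]
  · rw [hb _ (by omega), mul_zero]

/-- Let `(b_u)_{u ∈ ℤ}` be a sequence with `b_u = 0` for `u < 0` and
`b_u = [k - m(n-u-d_i) choose i]_q` for `u > n - d^⊥ - d_i`.  Then the power series
`P(T) = (∑_{u ≥ 0} b_u T^u) · ∏_{j=0}^{i} (1 - q^{mj} T)` has coefficients
`p_u = ∑_{j=0}^{i+1} [i+1 choose j]_{q^m} (-1)^j q^{m·binom(j,2)} b_{u-j}` and is a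
polynomial of degree at most `n - d^⊥ - d_i + i + 1`. -/
theorem zeta_polynomial_general (q : ℚ) (hq : 2 ≤ q) (m n k dperp di : ℤ) (hm : 1 ≤ m)
    (i : ℕ) (b : ℤ → ℚ) (hneg : ∀ u : ℤ, u < 0 → b u = 0)
    (htail : ∀ u : ℤ, n - dperp - di < u → b u = qbinQ q (k - m * (n - u - di)) i)
    (P : PowerSeries ℚ)
    (hP : P = (PowerSeries.mk fun u : ℕ => b u) *
      ∏ j ∈ Finset.range (i + 1), (1 - PowerSeries.C (q ^ (m * j)) * PowerSeries.X)) :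
    (∀ u : ℕ, PowerSeries.coeff u P =
      ∑ j ∈ Finset.range (i + 2),
        qbinQ (q ^ m) (i + 1) j * (-1) ^ j * q ^ (m * (j.choose 2)) * b ((u : ℤ) - j)) ∧
    (∀ u : ℕ, n - dperp - di + i + 1 < (u : ℤ) → PowerSeries.coeff u P = 0) := by
  set Q : ℚ := q ^ m
  have hQ : 1 < Q := one_lt_zpow₀ (by linarith) (by omega)
  have hpow (j : ℕ) : q ^ (m * (j : ℤ)) = Q ^ j := by rw [zpow_mul, zpow_natCast]
  have hcoeff (j : ℕ) :
      qbinQ Q ((i : ℤ) + 1) j * (-1) ^ j * q ^ (m * (j.choose 2 : ℤ)) =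
        qbinSigned Q (i + 1) j := by
    rw [hpow, qbinSigned, Nat.cast_succ]
  have hcoeffP (u : ℕ) :
      coeff u P = ∑ j ∈ range (i + 2), qbinSigned Q (i + 1) j * b (u - j) := by
    rw [hP]
    simp only [hpow, PowerSeries.prod_one_sub_C_pow_mul_X hQ,
      PowerSeries.coeff_mk_mul_sum_C_mul_X_pow b hneg]
  simp only [hcoeff]
  refine ⟨hcoeffP, fun u hu => ?_⟩
  obtain ⟨f, hf, hfeval⟩ :=
    exists_qbinQ_sub_eq_eval_zpow_neg (by positivity : q ≠ 0) (k - m * (n - u - di)) i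
  rw [hcoeffP u, ← sum_qbinSigned_mul_eval_inv_pow_eq_zero hQ f (Nat.lt_succ_of_le hf)]
  refine sum_congr rfl fun j hj => ?_
  have hj : (j : ℤ) ≤ i + 1 := by have := mem_range.1 hj; omega
  rw [htail _ (by omega),
    show k - m * (n - (u - j) - di) = k - m * (n - u - di) - m * j by ring,
    hfeval, zpow_neg, hpow, inv_pow]
end
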